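/- If a density operator ρ on ℂ²⊗ℂ² has an eigendecomposition ρ = Σ_i λ_i |α_i⟩⟨α_i|⊗|β_i⟩⟨β_i| in which every eigenvector (with λ_i > 0) is a product vector, then ρ can be written either in the form Σ_k p_k |ψ_k⟩⟨ψ_k| ⊗ ρ_k with {|ψ_k⟩} orthonormal in ℂ² and ρ_k density operators, or in the form Σ_k p_k ρ_k ⊗ |ψ_k⟩⟨ψ_k| with {|ψ_k⟩} orthonormal. -/

import Mathlib

open Matrix
open scoped ComplexOrder

/-- Rank-one projector |v⟩⟨v|. -/
noncomputable def proj {n : Type*} (v : n → ℂ) : Matrix n n ℂ :=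
  Matrix.vecMulVec v (star v)

/-- Tensor product of vectors. -/
noncomputable def tens {a b : Type*} (v : a → ℂ) (w : b → ℂ) : a × b → ℂ :=
  fun p => v p.1 * w p.2

/-- Hermitian inner product ⟨u|v⟩. -/
noncomputable def inner' {n : Type*} [Fintype n] (u v : n → ℂ) : ℂ :=
  dotProduct (star u) v

/-- Square root of a positive semidefinite matrix (as in the older Mathlib). -/
noncomputable def Matrix.PosSemidef.sqrt {𝕜 : Type*} [RCLike 𝕜] {n : Type*} [Fintype n] [DecidableEq n]
    {A : Matrix n n 𝕜} (hA : A.PosSemidef) : Matrix n n 𝕜 :=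
  hA.1.eigenvectorUnitary.1 * diagonal ((↑) ∘ (√·) ∘ hA.1.eigenvalues) *
    (star hA.1.eigenvectorUnitary : Matrix n n 𝕜)

open Classical in
/-- Uhlmann fidelity Tr √(√ρ σ √ρ) (0 if inputs are not positive semidefinite). -/
noncomputable def fid {n : Type*} [Fintype n] [DecidableEq n]
    (ρ σ : Matrix n n ℂ) : ℝ :=
  if h : ρ.PosSemidef ∧ σ.PosSemidef then
    ((h.2.mul_mul_conjTranspose_same h.1.sqrt).sqrt).trace.re
  else 0

/-- Partial trace over the second subsystem. -/
noncomputable def ptraceB {a b : Type*} [Fintype b] (M : Matrix (a × b) (a × b) ℂ) : Matrix a a ℂ :=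
  fun i j => ∑ k, M (i, k) (j, k)

/-- Partial trace over the first subsystem. -/
noncomputable def ptraceA {a b : Type*} [Fintype a] (M : Matrix (a × b) (a × b) ℂ) : Matrix b b ℂ :=
  fun i j => ∑ k, M (k, i) (k, j)



/-!
For `i ≠ j` the orthogonality of `αᵢ ⊗ βᵢ` and `αⱼ ⊗ βⱼ` means `αᵢ ⊥ αⱼ` or `βᵢ ⊥ βⱼ`.
In `ℂ²` this forces one of the two families into a single orthonormal frame: if `αᵢ` and `αⱼ`
are neither parallel nor orthogonal then `βᵢ ⊥ βⱼ`, and every other `βₖ` is orthogonal to `βᵢ`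
or to `βⱼ` (else `αᵢ, αⱼ` would both be orthogonal to `αₖ`, hence parallel), so it is parallel to
`βⱼ` or to `βᵢ`. If, say, every `αᵢ` is a multiple of `ψ₀` or `ψ₁` for an orthonormal basis
`ψ₀, ψ₁`, grouping the terms of `ρ` by that basis vector gives `ρ = ∑ₖ pₖ |ψₖ⟩⟨ψₖ| ⊗ ρₖ`.
-/

open Kronecker

section inner'
variable {n : Type*} [Fintype n]

lemma inner'_comm (u v : n → ℂ) : inner' v u = star (inner' u v) :=
  star_dotProduct _ _

lemma inner'_eq_zero_comm {u v : n → ℂ} : inner' u v = 0 ↔ inner' v u = 0 := by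
  rw [inner'_comm u v, star_eq_zero]

lemma inner'_self_pos {v : n → ℂ} (hv : v ≠ 0) : 0 < inner' v v :=
  dotProduct_star_self_pos_iff.2 hv

lemma inner'_smul_left (c : ℂ) (u v : n → ℂ) : inner' (c • u) v = star c * inner' u v := by
  simp [inner', star_smul, smul_dotProduct]

lemma inner'_smul_right (c : ℂ) (u v : n → ℂ) : inner' u (c • v) = c * inner' u v := by
  simp [inner', dotProduct_smul]

lemma inner'_tens {a b : Type*} [Fintype a] [Fintype b] (u u' : a → ℂ) (v v' : b → ℂ) :
    inner' (tens u v) (tens u' v') = inner' u u' * inner' v v' := by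
  simp only [inner', dotProduct, tens, Pi.star_apply, star_mul', Finset.sum_mul_sum,
    Fintype.sum_prod_type]
  exact Finset.sum_congr rfl fun _ _ => Finset.sum_congr rfl fun _ _ => by ring

lemma trace_proj (v : n → ℂ) : (proj v).trace = inner' v v := by
  rw [proj, trace_vecMulVec, dotProduct_comm]; rfl

lemma posSemidef_proj (v : n → ℂ) : (proj v).PosSemidef :=
  posSemidef_vecMulVec_self_star v

lemma proj_smul (c : ℂ) (v : n → ℂ) : proj (c • v) = (c * star c) • proj v := by
  rw [proj, star_smul, smul_vecMulVec, vecMulVec_smul, smul_smul]; rfl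

lemma exists_inner'_smul_self_eq_one {e : n → ℂ} (he : e ≠ 0) :
    ∃ c : ℂ, c ≠ 0 ∧ inner' (c • e) (c • e) = 1 := by
  obtain ⟨r, hr, hre⟩ := RCLike.pos_iff_exists_ofReal.1 (inner'_self_pos he)
  have hr' : (r : ℂ) ≠ 0 := Complex.ofReal_ne_zero.2 hr.ne'
  refine ⟨((√r)⁻¹ : ℝ), by simpa [Real.sqrt_eq_zero'] using hr, ?_⟩
  rw [inner'_smul_left, inner'_smul_right, ← hre, ← mul_assoc, Complex.star_def,
    Complex.conj_ofReal, ← Complex.ofReal_mul, ← mul_inv, Real.mul_self_sqrt hr.le,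
    Complex.ofReal_inv]
  exact inv_mul_cancel₀ hr'

end inner'

lemma proj_tens {a b : Type*} (u : a → ℂ) (v : b → ℂ) : proj (tens u v) = proj u ⊗ₖ proj v := by
  ext ⟨x, y⟩ ⟨x', y'⟩
  simp only [proj, tens, vecMulVec_apply, kronecker_apply, Pi.star_apply, star_mul']
  ring

noncomputable def perpVec (w : Fin 2 → ℂ) : Fin 2 → ℂ :=
  ![star (w 1), -star (w 0)]

lemma inner'_perpVec (w : Fin 2 → ℂ) : inner' w (perpVec w) = 0 := by
  simp [inner', dotProduct, perpVec, Fin.sum_univ_two]; ring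

lemma inner'_perpVec_perpVec (w : Fin 2 → ℂ) : inner' (perpVec w) (perpVec w) = inner' w w := by
  simp [inner', dotProduct, perpVec, Fin.sum_univ_two]; ring

lemma inner'_self_smul_eq_add (w u : Fin 2 → ℂ) :
    inner' w w • u = inner' w u • w + inner' (perpVec w) u • perpVec w := by
  ext x
  fin_cases x <;> simp [inner', dotProduct, perpVec, Fin.sum_univ_two] <;> ring

lemma eq_smul_perpVec_of_inner'_eq_zero {w u : Fin 2 → ℂ} (hw : w ≠ 0) (h : inner' w u = 0) :
    u = (inner' (perpVec w) u / inner' w w) • perpVec w := by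
  have hww : inner' w w ≠ 0 := (inner'_self_pos hw).ne'
  have := inner'_self_smul_eq_add w u
  rw [h, zero_smul, zero_add] at this
  rw [div_eq_inv_mul, ← smul_smul, ← this, smul_smul, inv_mul_cancel₀ hww, one_smul]

lemma exists_eq_smul_of_inner'_eq_zero {w u v : Fin 2 → ℂ} (hw : w ≠ 0) (hv : v ≠ 0)
    (hu : inner' w u = 0) (hwv : inner' w v = 0) : ∃ c : ℂ, u = c • v := by
  rw [eq_smul_perpVec_of_inner'_eq_zero hw hu]
  set d := inner' (perpVec w) v / inner' w w
  have hv' : v = d • perpVec w := eq_smul_perpVec_of_inner'_eq_zero hw hwv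
  have hd : d ≠ 0 := by rintro hd; rw [hd, zero_smul] at hv'; exact hv hv'
  exact ⟨_ / d, by rw [hv', smul_smul, div_mul_cancel₀ _ hd]⟩

lemma exists_orthonormal_frame {e : Fin 2 → ℂ} (he : e ≠ 0) :
    ∃ ψ : Fin 2 → Fin 2 → ℂ, (∀ k l, inner' (ψ k) (ψ l) = if k = l then 1 else 0) ∧
      ∀ u : Fin 2 → ℂ, ((∃ c : ℂ, u = c • e) ∨ inner' e u = 0) → ∃ k, ∃ c : ℂ, u = c • ψ k := by
  obtain ⟨c, hc, hunit⟩ := exists_inner'_smul_self_eq_one he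
  have hce : c • e ≠ 0 := smul_ne_zero hc he
  refine ⟨![c • e, perpVec (c • e)], ?_, ?_⟩
  · have h10 : inner' (perpVec (c • e)) (c • e) = 0 :=
      inner'_eq_zero_comm.1 (inner'_perpVec _)
    intro k l
    fin_cases k <;> fin_cases l <;>
      simp [hunit, inner'_perpVec, inner'_perpVec_perpVec, h10]
  · rintro u (⟨d, rfl⟩ | hu)
    · exact ⟨0, d / c, by simp [smul_smul, div_mul_cancel₀ _ hc]⟩
    · refine ⟨1, _, eq_smul_perpVec_of_inner'_eq_zero hce ?_⟩
      rw [inner'_smul_left, hu, mul_zero]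

lemma exists_frame_of_forall_orthogonal {ι : Type*} [Nonempty ι] {α β : ι → Fin 2 → ℂ}
    (hα : ∀ i, α i ≠ 0) (hβ : ∀ i, β i ≠ 0)
    (horth : ∀ i j, i ≠ j → inner' (α i) (α j) = 0 ∨ inner' (β i) (β j) = 0) :
    (∃ e ≠ 0, ∀ i, (∃ c : ℂ, α i = c • e) ∨ inner' e (α i) = 0) ∨
      (∃ e ≠ 0, ∀ i, (∃ c : ℂ, β i = c • e) ∨ inner' e (β i) = 0) := by
  obtain ⟨j⟩ := ‹Nonempty ι›
  by_cases hj : ∀ i, (∃ c : ℂ, α i = c • α j) ∨ inner' (α j) (α i) = 0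
  · exact Or.inl ⟨α j, hα j, hj⟩
  push Not at hj
  obtain ⟨i, hnpar, hnorth⟩ := hj
  have hij : i ≠ j := by rintro rfl; exact hnpar 1 (one_smul _ _).symm
  have hβij : inner' (β i) (β j) = 0 :=
    (horth i j hij).resolve_left (mt inner'_eq_zero_comm.1 hnorth)
  refine Or.inr ⟨β j, hβ j, fun k => or_iff_not_imp_right.2 fun hk => ?_⟩
  obtain rfl | hkj := eq_or_ne k j
  · exact ⟨1, (one_smul _ _).symm⟩
  have hαkj : inner' (α k) (α j) = 0 :=
    (horth k j hkj).resolve_right (mt inner'_eq_zero_comm.1 hk)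
  have hki : k ≠ i := by rintro rfl; exact hk (inner'_eq_zero_comm.1 hβij)
  rcases horth k i hki with hαki | hβki
  · exact absurd (exists_eq_smul_of_inner'_eq_zero (hα k) (hα j) hαki hαkj)
      fun ⟨c, hc⟩ => hnpar c hc
  · exact exists_eq_smul_of_inner'_eq_zero (hβ i) (hβ j) (inner'_eq_zero_comm.1 hβki) hβij

section semiClassical
variable {a b : Type*} [Fintype a] [Fintype b]

def IsSemiClassicalA (ρ : Matrix (a × b) (a × b) ℂ) : Prop :=
  ∃ (m : ℕ) (p : Fin m → ℝ) (ψ : Fin m → a → ℂ) (σ : Fin m → Matrix b b ℂ),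
    (∀ k, 0 ≤ p k) ∧ (∑ k, p k = 1) ∧
    (∀ k l, inner' (ψ k) (ψ l) = if k = l then 1 else 0) ∧
    (∀ k, (σ k).PosSemidef ∧ (σ k).trace = 1) ∧
    ρ = ∑ k, ((p k : ℝ) : ℂ) • (proj (ψ k) ⊗ₖ σ k)

def IsSemiClassicalB (ρ : Matrix (a × b) (a × b) ℂ) : Prop :=
  ∃ (m : ℕ) (p : Fin m → ℝ) (ψ : Fin m → b → ℂ) (σ : Fin m → Matrix a a ℂ),
    (∀ k, 0 ≤ p k) ∧ (∑ k, p k = 1) ∧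
    (∀ k l, inner' (ψ k) (ψ l) = if k = l then 1 else 0) ∧
    (∀ k, (σ k).PosSemidef ∧ (σ k).trace = 1) ∧
    ρ = ∑ k, ((p k : ℝ) : ℂ) • (σ k ⊗ₖ proj (ψ k))

lemma isSemiClassicalB_of_submatrix_swap {ρ : Matrix (a × b) (a × b) ℂ}
    (h : IsSemiClassicalA (ρ.submatrix Prod.swap Prod.swap)) : IsSemiClassicalB ρ := by
  obtain ⟨m, p, ψ, σ, hp, hpsum, hψ, hσ, hρ⟩ := h
  refine ⟨m, p, ψ, σ, hp, hpsum, hψ, hσ, ?_⟩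
  ext ⟨x, y⟩ ⟨x', y'⟩
  simpa [Matrix.sum_apply, mul_comm] using congrFun (congrFun hρ (y, x)) (y', x')

end semiClassical

lemma isSemiClassicalA_sum_kronecker {a b ι : Type*} [Fintype a] [Fintype b] [Fintype ι]
    {m : ℕ} {ψ : Fin m → a → ℂ} (hψ : ∀ k l, inner' (ψ k) (ψ l) = if k = l then 1 else 0)
    (cls : ι → Fin m) {lam : ι → ℝ} (hlam : ∀ i, 0 ≤ lam i) (hsum : ∑ i, lam i = 1)
    {τ : ι → Matrix b b ℂ} (hτ : ∀ i, (τ i).PosSemidef ∧ (τ i).trace = 1) :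
    IsSemiClassicalA (∑ i, ((lam i : ℝ) : ℂ) • (proj (ψ (cls i)) ⊗ₖ τ i)) := by
  classical
  obtain ⟨i₀⟩ : Nonempty ι :=
    Finset.univ_nonempty_iff.1 (Finset.nonempty_of_sum_ne_zero (hsum ▸ one_ne_zero))
  set p : Fin m → ℝ := fun k => ∑ i with cls i = k, lam i
  set M : Fin m → Matrix b b ℂ := fun k => ∑ i with cls i = k, ((lam i : ℝ) : ℂ) • τ i
  have hM_psd : ∀ k, (M k).PosSemidef := fun k =>
    posSemidef_sum _ fun i _ => (hτ i).1.smul (Complex.zero_le_real.2 (hlam i))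
  have hM_trace : ∀ k, (M k).trace = p k := fun k => by
    simp [M, p, trace_sum, trace_smul, (hτ _).2]
  -- a class with `p k = 0` contributes nothing, so any density matrix will do for it
  set σ : Fin m → Matrix b b ℂ := fun k => if p k = 0 then τ i₀ else (((p k)⁻¹ : ℝ) : ℂ) • M k
  have hpσ : ∀ k, ((p k : ℝ) : ℂ) • σ k = M k := fun k => by
    by_cases hp : p k = 0
    · rw [hp, Complex.ofReal_zero, zero_smul, eq_comm, ← (hM_psd k).trace_eq_zero_iff,
        hM_trace, hp, Complex.ofReal_zero]
    · simp only [σ, if_neg hp, smul_smul, ← Complex.ofReal_mul, mul_inv_cancel₀ hp,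
        Complex.ofReal_one, one_smul]
  refine ⟨m, p, ψ, σ, fun k => Finset.sum_nonneg fun i _ => hlam i, ?_, hψ, fun k => ?_, ?_⟩
  · rw [Finset.sum_fiberwise, hsum]
  · by_cases hp : p k = 0
    · simpa only [σ, if_pos hp] using hτ i₀
    · simp only [σ, if_neg hp]
      refine ⟨(hM_psd k).smul (Complex.zero_le_real.2 (inv_nonneg.2 ?_)), ?_⟩
      · exact Finset.sum_nonneg fun i _ => hlam i
      · rw [trace_smul, hM_trace, smul_eq_mul, ← Complex.ofReal_mul, inv_mul_cancel₀ hp,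
          Complex.ofReal_one]
  · calc ∑ i, ((lam i : ℝ) : ℂ) • (proj (ψ (cls i)) ⊗ₖ τ i)
        = ∑ k, ∑ i with cls i = k, ((lam i : ℝ) : ℂ) • (proj (ψ k) ⊗ₖ τ i) := by
          rw [← Finset.sum_fiberwise _ cls]
          refine Finset.sum_congr rfl fun k _ => Finset.sum_congr rfl fun i hi => ?_
          rw [(Finset.mem_filter.1 hi).2]
      _ = ∑ k, proj (ψ k) ⊗ₖ M k := by
          refine Finset.sum_congr rfl fun k _ => ?_
          ext ⟨x, y⟩ ⟨x', y'⟩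
          simp [M, Matrix.sum_apply, Finset.mul_sum, mul_left_comm]
      _ = ∑ k, ((p k : ℝ) : ℂ) • (proj (ψ k) ⊗ₖ σ k) := by
          simp only [← hpσ, kronecker_smul]

lemma isSemiClassicalA_sum_proj_kronecker_proj {a b ι : Type*} [Fintype a] [Fintype b]
    [Fintype ι] {m : ℕ} {ψ : Fin m → a → ℂ}
    (hψ : ∀ k l, inner' (ψ k) (ψ l) = if k = l then 1 else 0)
    {γ : ι → a → ℂ} (hγ : ∀ i, ∃ k, ∃ c : ℂ, γ i = c • ψ k) {δ : ι → b → ℂ}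
    (hnorm : ∀ i, inner' (γ i) (γ i) * inner' (δ i) (δ i) = 1)
    {lam : ι → ℝ} (hlam : ∀ i, 0 ≤ lam i) (hsum : ∑ i, lam i = 1) :
    IsSemiClassicalA (∑ i, ((lam i : ℝ) : ℂ) • (proj (γ i) ⊗ₖ proj (δ i))) := by
  choose cls c hc using hγ
  have hkron : ∀ i, proj (γ i) ⊗ₖ proj (δ i) =
      proj (ψ (cls i)) ⊗ₖ ((c i * star (c i)) • proj (δ i)) := fun i => by
    rw [hc, proj_smul, smul_kronecker, kronecker_smul]
  have hτ : ∀ i, ((c i * star (c i)) • proj (δ i)).PosSemidef ∧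
      ((c i * star (c i)) • proj (δ i)).trace = 1 := fun i => by
    refine ⟨(posSemidef_proj _).smul (mul_star_self_nonneg _), ?_⟩
    rw [trace_smul, trace_proj, ← hnorm i, hc, inner'_smul_left, inner'_smul_right, hψ,
      if_pos rfl, smul_eq_mul]
    ring
  simp_rw [hkron]
  exact isSemiClassicalA_sum_kronecker hψ cls hlam hsum hτ

lemma isSemiClassicalB_sum_proj_kronecker_proj {a b ι : Type*} [Fintype a] [Fintype b]
    [Fintype ι] {m : ℕ} {ψ : Fin m → b → ℂ}
    (hψ : ∀ k l, inner' (ψ k) (ψ l) = if k = l then 1 else 0)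
    {γ : ι → a → ℂ} {δ : ι → b → ℂ} (hδ : ∀ i, ∃ k, ∃ c : ℂ, δ i = c • ψ k)
    (hnorm : ∀ i, inner' (γ i) (γ i) * inner' (δ i) (δ i) = 1)
    {lam : ι → ℝ} (hlam : ∀ i, 0 ≤ lam i) (hsum : ∑ i, lam i = 1) :
    IsSemiClassicalB (∑ i, ((lam i : ℝ) : ℂ) • (proj (γ i) ⊗ₖ proj (δ i))) := by
  refine isSemiClassicalB_of_submatrix_swap ?_
  have hswap :
      (∑ i, ((lam i : ℝ) : ℂ) • (proj (γ i) ⊗ₖ proj (δ i))).submatrix Prod.swap Prod.swap =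
        ∑ i, ((lam i : ℝ) : ℂ) • (proj (δ i) ⊗ₖ proj (γ i)) := by
    ext ⟨x, y⟩ ⟨x', y'⟩
    simp [Matrix.sum_apply, mul_comm]
  rw [hswap]
  exact isSemiClassicalA_sum_proj_kronecker_proj hψ hδ (fun i => (mul_comm _ _).trans (hnorm i))
    hlam hsum

open Kronecker in
theorem stmt8_general {ι : Type*} [Fintype ι] [DecidableEq ι]
    (ρ : Matrix (Fin 2 × Fin 2) (Fin 2 × Fin 2) ℂ)
    (htr : ρ.trace = 1)
    (lam : ι → ℝ) (α β : ι → Fin 2 → ℂ)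
    (hlam : ∀ i, 0 < lam i)
    (hON : ∀ i j, inner' (tens (α i) (β i)) (tens (α j) (β j)) = if i = j then 1 else 0)
    (hρ : ρ = ∑ i, ((lam i : ℝ) : ℂ) • proj (tens (α i) (β i))) :
    (∃ (m : ℕ) (p : Fin m → ℝ) (ψ : Fin m → Fin 2 → ℂ)
        (σ : Fin m → Matrix (Fin 2) (Fin 2) ℂ),
        (∀ k, 0 ≤ p k) ∧ (∑ k, p k = 1) ∧
        (∀ k l, inner' (ψ k) (ψ l) = if k = l then 1 else 0) ∧
        (∀ k, (σ k).PosSemidef ∧ (σ k).trace = 1) ∧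
        ρ = ∑ k, ((p k : ℝ) : ℂ) • (proj (ψ k) ⊗ₖ σ k)) ∨
    (∃ (m : ℕ) (p : Fin m → ℝ) (ψ : Fin m → Fin 2 → ℂ)
        (σ : Fin m → Matrix (Fin 2) (Fin 2) ℂ),
        (∀ k, 0 ≤ p k) ∧ (∑ k, p k = 1) ∧
        (∀ k l, inner' (ψ k) (ψ l) = if k = l then 1 else 0) ∧
        (∀ k, (σ k).PosSemidef ∧ (σ k).trace = 1) ∧
        ρ = ∑ k, ((p k : ℝ) : ℂ) • (σ k ⊗ₖ proj (ψ k))) := by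
  show IsSemiClassicalA ρ ∨ IsSemiClassicalB ρ
  have hnorm : ∀ i, inner' (α i) (α i) * inner' (β i) (β i) = 1 := fun i => by
    simpa [inner'_tens] using hON i i
  have hα : ∀ i, α i ≠ 0 := fun i h => by simpa [h, inner'] using hnorm i
  have hβ : ∀ i, β i ≠ 0 := fun i h => by simpa [h, inner'] using hnorm i
  have horth : ∀ i j, i ≠ j → inner' (α i) (α j) = 0 ∨ inner' (β i) (β j) = 0 := fun i j hij =>
    mul_eq_zero.1 (by simpa [inner'_tens, hij] using hON i j)
  have hsum : ∑ i, lam i = 1 := by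
    exact_mod_cast (by simpa [hρ, trace_sum, trace_smul, trace_proj, hON] using htr :
      ∑ i, ((lam i : ℝ) : ℂ) = 1)
  have : Nonempty ι :=
    Finset.univ_nonempty_iff.1 (Finset.nonempty_of_sum_ne_zero (hsum ▸ one_ne_zero))
  have hρ' : ρ = ∑ i, ((lam i : ℝ) : ℂ) • (proj (α i) ⊗ₖ proj (β i)) := by
    simp only [hρ, proj_tens]
  rw [hρ']
  rcases exists_frame_of_forall_orthogonal hα hβ horth with ⟨e, he, hαe⟩ | ⟨e, he, hβe⟩
  · obtain ⟨ψ, hψ, hline⟩ := exists_orthonormal_frame he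
    exact Or.inl <| isSemiClassicalA_sum_proj_kronecker_proj hψ (fun i => hline _ (hαe i)) hnorm
      (fun i => (hlam i).le) hsum
  · obtain ⟨ψ, hψ, hline⟩ := exists_orthonormal_frame he
    exact Or.inr <| isSemiClassicalB_sum_proj_kronecker_proj hψ (fun i => hline _ (hβe i)) hnorm
      (fun i => (hlam i).le) hsum

open Kronecker in
theorem stmt8 {ι : Type*} [Fintype ι] [DecidableEq ι]
    (ρ : Matrix (Fin 2 × Fin 2) (Fin 2 × Fin 2) ℂ)
    (hpsd : ρ.PosSemidef) (htr : ρ.trace = 1)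
    (lam : ι → ℝ) (α β : ι → Fin 2 → ℂ)
    (hlam : ∀ i, 0 < lam i)
    (hON : ∀ i j, inner' (tens (α i) (β i)) (tens (α j) (β j)) = if i = j then 1 else 0)
    (hρ : ρ = ∑ i, ((lam i : ℝ) : ℂ) • proj (tens (α i) (β i))) :
    (∃ (m : ℕ) (p : Fin m → ℝ) (ψ : Fin m → Fin 2 → ℂ)
        (σ : Fin m → Matrix (Fin 2) (Fin 2) ℂ),
        (∀ k, 0 ≤ p k) ∧ (∑ k, p k = 1) ∧
        (∀ k l, inner' (ψ k) (ψ l) = if k = l then 1 else 0) ∧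
        (∀ k, (σ k).PosSemidef ∧ (σ k).trace = 1) ∧
        ρ = ∑ k, ((p k : ℝ) : ℂ) • (proj (ψ k) ⊗ₖ σ k)) ∨
    (∃ (m : ℕ) (p : Fin m → ℝ) (ψ : Fin m → Fin 2 → ℂ)
        (σ : Fin m → Matrix (Fin 2) (Fin 2) ℂ),
        (∀ k, 0 ≤ p k) ∧ (∑ k, p k = 1) ∧
        (∀ k l, inner' (ψ k) (ψ l) = if k = l then 1 else 0) ∧
        (∀ k, (σ k).PosSemidef ∧ (σ k).trace = 1) ∧
        ρ = ∑ k, ((p k : ℝ) : ℂ) • (σ k ⊗ₖ proj (ψ k))) :=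
  stmt8_general ρ htr lam α β hlam hON hρ
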